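/- arXiv:2008.09449 — 5 statements merged into one kernel-verified Lean document; each statement's English description precedes it below -/
import Mathlib

section
/- If a group G admits a faithful orientation-preserving affine action on ℤ^n_lex for some n ∈ ℕ, then G is finitely generated, torsion-free, and nilpotent. -/
/-- `Fin n → R` with the lexicographic order in which the **last** coordinate is the most
significant: `x < y` iff `x ≠ y` and `x i < y i` at the largest index `i` where `x` and `y`
differ. -/
def LexPow (R : Type*) (n : ℕ) : Type _ := Fin n → R

namespace LexPow

variable {R : Type*} {n : ℕ}

/-- The identity bijection between `Fin n → R` and `LexPow R n`. -/
def of : (Fin n → R) ≃ LexPow R n := Equiv.refl _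

instance : CoeFun (LexPow R n) (fun _ => Fin n → R) := ⟨fun x => x⟩

instance [AddCommGroup R] : AddCommGroup (LexPow R n) :=
  inferInstanceAs (AddCommGroup (Fin n → R))

/-- The map reversing coordinates, into the Mathlib lexicographic order (in which the *first*
coordinate is most significant). -/
def toRevLex (x : LexPow R n) : Lex (Fin n → R) :=
  toLex (fun i : Fin n => of.symm x (Fin.rev i))

theorem toRevLex_injective : Function.Injective (toRevLex (R := R) (n := n)) := by
  intro a b hab
  refine of.symm.injective (funext fun i => ?_)
  have h := congrFun (congrArg ofLex hab) (Fin.rev i)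
  simpa [toRevLex, Fin.rev_rev] using h

noncomputable instance [AddCommGroup R] [LinearOrder R] [IsOrderedAddMonoid R] :
    LinearOrder (LexPow R n) :=
  LinearOrder.lift' (toRevLex (R := R) (n := n)) toRevLex_injective

instance [AddCommGroup R] [LinearOrder R] [IsOrderedAddMonoid R] :
    IsOrderedAddMonoid (LexPow R n) where
  add_le_add_left := fun a b hab c => by
    show toRevLex (a + c) ≤ toRevLex (b + c)
    have h : toRevLex a ≤ toRevLex b := hab
    exact add_le_add_left h (toRevLex c)

end LexPow

/-- An orientation-preserving affine automorphism of a linearly ordered abelian group `Λ`: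
an order-preserving bijection `g` of `Λ` admitting an order-preserving group automorphism
`dilation` (the dilation factor) with `g x - g y = dilation (x - y)` for all `x, y`. -/
structure OPAffineAut (Λ : Type*) [AddCommGroup Λ] [LinearOrder Λ] [IsOrderedAddMonoid Λ] extends Λ ≃ Λ where
  strictMono' : StrictMono toEquiv
  dilation : Λ ≃+ Λ
  dilation_strictMono : StrictMono dilation
  affine : ∀ x y : Λ, toEquiv x - toEquiv y = dilation (x - y)

namespace OPAffineAut

variable {Λ : Type*} [AddCommGroup Λ] [LinearOrder Λ] [IsOrderedAddMonoid Λ]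

instance : CoeFun (OPAffineAut Λ) (fun _ => Λ → Λ) := ⟨fun f => f.toEquiv⟩

theorem ext' {f g : OPAffineAut Λ} (h : ∀ x, f x = g x) : f = g := by
  have he : f.toEquiv = g.toEquiv := Equiv.ext h
  have hd : f.dilation = g.dilation := AddEquiv.ext fun x => by
    have hf := f.affine x 0
    have hg := g.affine x 0
    rw [sub_zero] at hf hg
    rw [← hf, ← hg]
    show f x - f 0 = g x - g 0
    rw [h x, h 0]
  cases f; cases g
  cases he; cases hd
  rfl

instance : Group (OPAffineAut Λ) where
  one :=
    { toEquiv := Equiv.refl Λ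
      strictMono' := strictMono_id
      dilation := AddEquiv.refl Λ
      dilation_strictMono := strictMono_id
      affine := fun _ _ => rfl }
  mul f g :=
    { toEquiv := g.toEquiv.trans f.toEquiv
      strictMono' := f.strictMono'.comp g.strictMono'
      dilation := g.dilation.trans f.dilation
      dilation_strictMono := f.dilation_strictMono.comp g.dilation_strictMono
      affine := fun x y => by
        simp only [Equiv.trans_apply, AddEquiv.trans_apply]
        rw [f.affine, g.affine] }
  inv f :=
    { toEquiv := f.toEquiv.symm
      strictMono' := fun a b hab => f.strictMono'.lt_iff_lt.1 (by
        simpa only [Equiv.apply_symm_apply] using hab)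
      dilation := f.dilation.symm
      dilation_strictMono := fun a b hab => f.dilation_strictMono.lt_iff_lt.1 (by
        simpa only [AddEquiv.apply_symm_apply] using hab)
      affine := fun x y => f.dilation.injective (by
        rw [AddEquiv.apply_symm_apply, ← f.affine, Equiv.apply_symm_apply,
          Equiv.apply_symm_apply]) }
  mul_assoc f g h := ext' fun _ => rfl
  one_mul f := ext' fun _ => rfl
  mul_one f := ext' fun _ => rfl
  inv_mul_cancel f := ext' fun x => f.toEquiv.symm_apply_apply x

@[simp] theorem mul_apply (f g : OPAffineAut Λ) (x : Λ) : (f * g) x = f (g x) := rfl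
@[simp] theorem one_apply (x : Λ) : (1 : OPAffineAut Λ) x = x := rfl
@[simp] theorem inv_apply (f : OPAffineAut Λ) (x : Λ) : f⁻¹ x = f.toEquiv.symm x := rfl

/-- An affine automorphism is *hyperbolic* if it has no fixed point. -/
def Hyperbolic (f : OPAffineAut Λ) : Prop := ∀ x : Λ, f x ≠ x

/-- An affine automorphism is *rigid* if for `ε = ±1`, whenever `f^ε` moves some point up,
it moves every point up. -/
def Rigid (f : OPAffineAut Λ) : Prop :=
  ∀ ε : ℤ, ε = 1 ∨ ε = -1 → (∃ x : Λ, x < (f ^ ε) x) → ∀ y : Λ, y < (f ^ ε) y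

end OPAffineAut

/-- An orientation-preserving affine action (a homomorphism into the group of
orientation-preserving affine automorphisms) is *free* if every nontrivial group element
acts without fixed points. -/
def AffineActionFree {G Λ : Type*} [Group G] [AddCommGroup Λ] [LinearOrder Λ] [IsOrderedAddMonoid Λ]
    (ρ : G →* OPAffineAut Λ) : Prop :=
  ∀ g : G, g ≠ 1 → ∀ x : Λ, ρ g x ≠ x

/-- An orientation-preserving affine action is *essentially free* if every nontrivial group
element acts as a rigid hyperbolic affine automorphism. -/
def AffineActionEssentiallyFree {G Λ : Type*} [Group G] [AddCommGroup Λ] [LinearOrder Λ] [IsOrderedAddMonoid Λ]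
    (ρ : G →* OPAffineAut Λ) : Prop :=
  ∀ g : G, g ≠ 1 → (ρ g).Rigid ∧ (ρ g).Hyperbolic

/-- `G` admits an essentially free orientation-preserving affine action on `Λ`. -/
def HasEssentiallyFreeAffineAction (G : Type*) [Group G] (Λ : Type*)
    [AddCommGroup Λ] [LinearOrder Λ] [IsOrderedAddMonoid Λ] : Prop :=
  ∃ ρ : G →* OPAffineAut Λ, AffineActionEssentiallyFree ρ

/-- A monoid is torsion-free if no nontrivial element has finite order (the definition
`Monoid.IsTorsionFree` of the older Mathlib, since removed). -/
def Monoid.IsTorsionFree (G : Type*) [Monoid G] : Prop :=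
  ∀ g : G, g ≠ 1 → ¬IsOfFinOrder g

/-!
An order automorphism `α` of `ℤ^n_lex` permutes the convex subgroups
`V₀ ⊂ V₁ ⊂ ⋯ ⊂ Vₙ` (`Vₘ` = vectors vanishing from coordinate `m` on) monotonically, so it fixes
each of them; on `Vₘ₊₁ / Vₘ ≅ ℤ` it induces an order automorphism of `ℤ`, which is the identity.
Hence `α x - x ∈ Vₘ` for `x ∈ Vₘ₊₁`. Writing an affine map as the linear map
`(x, t) ↦ (α x + t • f 0, t)` of `ℤ^n_lex × ℤ`, the group `G` becomes a group of units `1 + E`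
of `End(ℤ^{n+1})` where `E` lowers a filtration of length `n + 1` by one step. Such units form a
central series `Gⱼ = {g | ρ g - 1 lowers by j steps}` ending at `1`, so `G` is nilpotent; and
`Gⱼ₊₁ / Gⱼ₊₂` embeds into the finitely generated abelian group `End / (lowering by j + 2)` via
`g ↦ ρ g - 1`, so `G` is finitely generated. An order-preserving bijection of finite order of a
linear order is the identity, so `G` is torsion-free.
-/

theorem Monoid.IsTorsionFree.of_injective {G H : Type*} [Monoid G] [Monoid H] {f : G →* H}
    (hf : Function.Injective f) (hH : Monoid.IsTorsionFree H) : Monoid.IsTorsionFree G :=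
  fun g hg hfin => hH (f g) (fun h1 => hg (hf (h1.trans (map_one f).symm)))
    (hf.isOfFinOrder_iff.2 hfin)

namespace Group

variable {G : Type*} [Group G]

theorem fg_of_fg_ker_of_fg_range {H : Type*} [Group H] (φ : G →* H) (hker : φ.ker.FG)
    (hrange : φ.range.FG) : Group.FG G := by
  classical
  obtain ⟨S, hS⟩ := hker
  obtain ⟨T, hT⟩ := hrange
  obtain ⟨T₀, -, hT₀⟩ := Finset.subset_set_image_iff.1
    (show (T : Set H) ⊆ φ '' Set.univ by
      rw [Set.image_univ, ← MonoidHom.coe_range, ← hT]; exact Subgroup.subset_closure)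
  refine ⟨⟨S ∪ T₀, eq_top_iff.2 fun g _ => ?_⟩⟩
  set K := Subgroup.closure ((S ∪ T₀ : Finset G) : Set G)
  have hkerK : φ.ker ≤ K := hS ▸ Subgroup.closure_mono (by simp)
  have hrangeK : φ.range ≤ K.map φ := by
    rw [← hT, MonoidHom.map_closure, ← hT₀, Finset.coe_image]
    exact Subgroup.closure_mono (Set.image_mono (by simp))
  have : K ⊔ φ.ker = ⊤ := by
    rw [← Subgroup.comap_map_eq, eq_top_iff]
    exact fun x _ => hrangeK ⟨x, rfl⟩
  rw [sup_eq_left.2 hkerK] at this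
  exact this ▸ Subgroup.mem_top g

theorem fg_of_fg_ker {Q : Type*} [AddCommGroup Q] [AddGroup.FG Q] (φ : G →* Multiplicative Q)
    (hker : Group.FG φ.ker) : Group.FG G := by
  refine fg_of_fg_ker_of_fg_range φ ((fg_iff_subgroup_fg _).1 hker) ?_
  have : Module.Finite ℤ Q := Module.Finite.iff_addGroup_fg.2 ‹_›
  let S : AddSubgroup Q := φ.range.toAddSubgroup
  have hS : (AddSubgroup.toIntSubmodule S).FG := IsNoetherian.noetherian _
  exact (Subgroup.fg_iff_add_fg _).2 ((Submodule.fg_iff_addSubgroup_fg _).1 hS)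

end Group

section UnitsFiltration

open scoped commutatorElement

variable {R : Type*} [Ring R] (I : ℕ → AddSubgroup R) [SetLike.GradedMonoid I]

/-- The congruence subgroup of level `j`: units of the ring `I 0` that are `≡ 1` modulo `I j`. -/
def unitsFiltration (j : ℕ) : Subgroup Rˣ where
  carrier := {u | (u : R) - 1 ∈ I j ∧ (u : R) ∈ I 0 ∧ ((u⁻¹ : Rˣ) : R) ∈ I 0}
  one_mem' := by
    simpa using SetLike.GradedOne.one_mem
  mul_mem' {u v} hu hv := by
    refine ⟨?_, SetLike.mul_mem_graded hu.2.1 hv.2.1, ?_⟩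
    · rw [Units.val_mul, show (u : R) * v - 1 = (u - 1) * v + (v - 1) by noncomm_ring]
      exact add_mem (SetLike.mul_mem_graded hu.1 hv.2.1) hv.1
    · rw [mul_inv_rev, Units.val_mul]
      exact SetLike.mul_mem_graded hv.2.2 hu.2.2
  inv_mem' {u} hu := by
    refine ⟨?_, hu.2.2, by simpa using hu.2.1⟩
    rw [show ((u⁻¹ : Rˣ) : R) - 1 = -((u - 1) * (u⁻¹ : Rˣ)) by simp [sub_mul]]
    exact neg_mem (SetLike.mul_mem_graded hu.1 hu.2.2)

variable {I}

theorem mem_unitsFiltration_of_sub_one_mem (hI : Antitone I) {j : ℕ} {u : Rˣ}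
    (hu : (u : R) - 1 ∈ I j) (hu' : ((u⁻¹ : Rˣ) : R) - 1 ∈ I j) : u ∈ unitsFiltration I j := by
  have h1 : (1 : R) ∈ I 0 := SetLike.GradedOne.one_mem
  refine ⟨hu, ?_, ?_⟩
  · simpa using add_mem (hI (Nat.zero_le j) hu) h1
  · simpa using add_mem (hI (Nat.zero_le j) hu') h1

theorem unitsFiltration_le_zero (j : ℕ) : unitsFiltration I j ≤ unitsFiltration I 0 :=
  fun _ hu => ⟨sub_mem hu.2.1 SetLike.GradedOne.one_mem, hu.2⟩

theorem unitsFiltration_antitone (hI : Antitone I) : Antitone (unitsFiltration I) :=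
  fun _ _ hij _ hu => ⟨hI hij hu.1, hu.2⟩

theorem unitsFiltration_eq_bot {N : ℕ} (hN : I N = ⊥) : unitsFiltration I N = ⊥ :=
  eq_bot_iff.2 fun u hu => Units.ext (sub_eq_zero.1 (by simpa [hN] using hu.1))

theorem commutatorElement_mem_unitsFiltration {i j : ℕ} {u v : Rˣ} (hu : u ∈ unitsFiltration I i)
    (hv : v ∈ unitsFiltration I j) : ⁅u, v⁆ ∈ unitsFiltration I (i + j) := by
  have h0 : ⁅u, v⁆ ∈ unitsFiltration I 0 := by
    rw [commutatorElement_def]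
    have hu0 := unitsFiltration_le_zero i hu
    have hv0 := unitsFiltration_le_zero j hv
    exact mul_mem (mul_mem (mul_mem hu0 hv0) (inv_mem hu0)) (inv_mem hv0)
  refine ⟨?_, h0.2⟩
  have hcomm : ((⁅u, v⁆ : Rˣ) : R) - 1
      = ((u - 1) * (v - 1) - (v - 1) * (u - 1)) * ((u⁻¹ : Rˣ) * (v⁻¹ : Rˣ) : R) := by
    rw [show ((u : R) - 1) * (v - 1) - (v - 1) * (u - 1) = u * v - v * u by noncomm_ring,
      sub_mul]
    simp [commutatorElement_def, mul_assoc]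
  rw [hcomm]
  have hdiff : ((u : R) - 1) * (v - 1) - (v - 1) * (u - 1) ∈ I (i + j) :=
    sub_mem (SetLike.mul_mem_graded hu.1 hv.1) (add_comm j i ▸ SetLike.mul_mem_graded hv.1 hu.1)
  exact SetLike.mul_mem_graded (j := 0) hdiff (SetLike.mul_mem_graded hu.2.2 hv.2.2)

theorem isNilpotent_of_forall_mem_unitsFiltration {N : ℕ} (hN : I N = ⊥) {G : Type*} [Group G]
    (ρ : G →* Rˣ) (hρ : Function.Injective ρ) (h : ∀ g, ρ g ∈ unitsFiltration I 1) :
    Group.IsNilpotent G := by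
  rw [Subgroup.nilpotent_iff_finite_descending_central_series]
  refine ⟨N, fun k => (unitsFiltration I k).comap ρ, ⟨?_, fun x k hx g => ?_⟩, ?_⟩
  · exact eq_top_iff.2 fun g _ => unitsFiltration_le_zero 1 (h g)
  · simpa [map_commutatorElement] using commutatorElement_mem_unitsFiltration hx (h g)
  · change (unitsFiltration I N).comap ρ = ⊥
    rw [unitsFiltration_eq_bot hN, MonoidHom.comap_bot]
    exact (MonoidHom.ker_eq_bot_iff ρ).2 hρ

/-- Modulo `I (j + 2)`, multiplication on the congruence subgroup of level `j + 1` is addition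
of the `u - 1`, because `(u - 1) * (v - 1) ∈ I (2 * j + 2)`. -/
def unitsFiltrationLeadingHom (hI : Antitone I) (j : ℕ) :
    unitsFiltration I (j + 1) →* Multiplicative (R ⧸ I (j + 2)) where
  toFun u := .ofAdd (QuotientAddGroup.mk (s := I (j + 2)) (((u : Rˣ) : R) - 1))
  map_one' := by simp
  map_mul' u v := by
    rw [← ofAdd_add, ← QuotientAddGroup.mk_add]
    refine congrArg _ ((QuotientAddGroup.eq_iff_sub_mem).2 ?_)
    rw [Subgroup.coe_mul, Units.val_mul, show ((u : Rˣ) : R) * (v : Rˣ) - 1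
      - (((u : Rˣ) : R) - 1 + (((v : Rˣ) : R) - 1)) = ((u : Rˣ) - 1) * ((v : Rˣ) - 1) by
        noncomm_ring]
    exact hI (by omega) (SetLike.mul_mem_graded u.2.1 v.2.1)

theorem unitsFiltrationLeadingHom_eq_one_iff (hI : Antitone I) {j : ℕ}
    (u : unitsFiltration I (j + 1)) :
    unitsFiltrationLeadingHom hI j u = 1 ↔ (u : Rˣ) ∈ unitsFiltration I (j + 2) := by
  simp only [unitsFiltrationLeadingHom, MonoidHom.coe_mk, OneHom.coe_mk, ofAdd_eq_one,
    QuotientAddGroup.eq_zero_iff]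
  exact ⟨fun hu => ⟨hu, u.2.2⟩, And.left⟩

theorem fg_of_forall_mem_unitsFiltration [AddGroup.FG R] (hI : Antitone I) {N : ℕ}
    (hN : I N = ⊥) {G : Type*} [Group G] (ρ : G →* Rˣ) (hρ : Function.Injective ρ) (k : ℕ)
    (h : ∀ g, ρ g ∈ unitsFiltration I (k + 1)) : Group.FG G := by
  obtain ⟨d, hd⟩ : ∃ d, N - k = d := ⟨_, rfl⟩
  induction d generalizing k G with
  | zero =>
    have htriv : ∀ g : G, g = 1 := fun g => hρ <| by
      rw [map_one, ← Subgroup.mem_bot, ← unitsFiltration_eq_bot hN]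
      exact unitsFiltration_antitone hI (by omega) (h g)
    have : Subsingleton G := ⟨fun a b => (htriv a).trans (htriv b).symm⟩
    infer_instance
  | succ d ih =>
    let φ := (unitsFiltrationLeadingHom hI k).comp (ρ.codRestrict _ h)
    refine Group.fg_of_fg_ker φ (ih (ρ.comp φ.ker.subtype) (hρ.comp Subtype.val_injective)
      (k + 1) (fun g => ?_) (by omega))
    exact (unitsFiltrationLeadingHom_eq_one_iff hI _).1 g.2

end UnitsFiltration

section Lowering

variable {A : Type*} [AddCommGroup A] (W : ℕ → AddSubgroup A)

def lowering (j : ℕ) : AddSubgroup (Module.End ℤ A) where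
  carrier := {E | ∀ m, ∀ v ∈ W (m + j), E v ∈ W m}
  zero_mem' _ _ _ := zero_mem _
  add_mem' hE hF m v hv := add_mem (hE m v hv) (hF m v hv)
  neg_mem' hE m v hv := neg_mem (hE m v hv)

instance : SetLike.GradedMonoid (lowering W) where
  one_mem _ _ hv := hv
  mul_mem i _ _ _ hE hF m v hv := hE m _ (hF (m + i) v (by rwa [← add_assoc] at hv))

variable {W}

theorem lowering_antitone (hW : Monotone W) : Antitone (lowering W) :=
  fun _ _ hij _ hE m v hv => hE m v (hW (by omega) hv)

theorem lowering_eq_bot {N : ℕ} (h0 : W 0 = ⊥) (hN : W N = ⊤) : lowering W N = ⊥ :=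
  eq_bot_iff.2 fun E hE => LinearMap.ext fun v => by
    simpa [h0] using hE 0 v (by simp [hN])

end Lowering

namespace LexPow

section

variable {R : Type*} [AddCommGroup R] {n : ℕ}

theorem lt_iff [LinearOrder R] [IsOrderedAddMonoid R] {a b : LexPow R n} :
    a < b ↔ ∃ i, a i < b i ∧ ∀ j, i < j → a j = b j := by
  change Pi.Lex (· < ·) (· < ·) (toRevLex a) (toRevLex b) ↔ _
  refine Fin.revPerm.exists_congr fun i => ?_
  refine and_comm.trans (and_congr Iff.rfl (Fin.revPerm.forall_congr fun j => ?_))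
  simp only [Fin.revPerm_apply, Fin.rev_lt_rev]
  rfl

def filtration (m : ℕ) : AddSubgroup (LexPow R n) where
  carrier := {x | ∀ i : Fin n, m ≤ i → x i = 0}
  zero_mem' _ _ := rfl
  add_mem' {x y} hx hy i hi := by
    change x i + y i = 0
    rw [hx i hi, hy i hi, add_zero]
  neg_mem' {x} hx i hi := by
    change -x i = 0
    rw [hx i hi, neg_zero]

theorem mem_filtration {m : ℕ} {x : LexPow R n} :
    x ∈ filtration m ↔ ∀ i : Fin n, m ≤ i → x i = 0 :=
  Iff.rfl

theorem filtration_mono : Monotone (filtration (R := R) (n := n)) :=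
  fun _ _ hmm' _ hx i hi => hx i (hmm'.trans hi)

theorem filtration_zero : filtration 0 = (⊥ : AddSubgroup (LexPow R n)) :=
  eq_bot_iff.2 fun _ hx => funext fun i => hx i (Nat.zero_le _)

theorem filtration_of_le {m : ℕ} (hm : n ≤ m) : filtration m = (⊤ : AddSubgroup (LexPow R n)) :=
  eq_top_iff.2 fun _ _ i hi => absurd i.isLt (by omega)

theorem exists_mem_filtration_succ_apply_ne_zero {x : LexPow R n} (hx : x ≠ 0) :
    ∃ s : Fin n, x ∈ filtration (s + 1) ∧ x s ≠ 0 := by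
  classical
  have hex : ∃ m, x ∈ filtration (R := R) (n := n) m := ⟨n, by simp [filtration_of_le]⟩
  have hpos : 0 < Nat.find hex := Nat.pos_of_ne_zero fun h0 => hx <| by
    simpa [h0, filtration_zero] using Nat.find_spec hex
  obtain ⟨s, hs, hxs⟩ : ∃ s : Fin n, Nat.find hex - 1 ≤ s ∧ x s ≠ 0 := by
    have hmin := Nat.find_min hex (Nat.sub_lt hpos one_pos)
    rw [mem_filtration] at hmin
    push Not at hmin
    exact hmin
  have hsm : (s : ℕ) < Nat.find hex := by
    by_contra! h
    exact hxs (Nat.find_spec hex s h)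
  refine ⟨s, ?_, hxs⟩
  rw [show (s : ℕ) + 1 = Nat.find hex by omega]
  exact Nat.find_spec hex

theorem apply_nonneg_of_pos [LinearOrder R] [IsOrderedAddMonoid R] {x : LexPow R n} (hx : 0 < x)
    {s : Fin n} (hxs : x ∈ filtration (s + 1)) : 0 ≤ x s := by
  obtain ⟨i, hi, hlt⟩ := lt_iff.1 hx
  rcases lt_trichotomy i s with his | rfl | hsi
  · exact (hlt s his).le
  · exact hi.le
  · exact absurd (hxs i hsi) hi.ne'

end

variable {n : ℕ}

theorem zsmul_apply (m : ℤ) (x : LexPow ℤ n) (i : Fin n) : (m • x) i = m * x i :=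
  rfl

theorem mem_filtration_iff_forall_zsmul_lt {y : LexPow ℤ n} (hy : 0 < y) {s : Fin n}
    (hys : y ∈ filtration (s + 1)) (hs : y s ≠ 0) {x : LexPow ℤ n} :
    x ∈ filtration s ↔ ∀ m : ℤ, m • x < y := by
  have hys_pos : 0 < y s := (apply_nonneg_of_pos hy hys).lt_of_ne' hs
  constructor
  · refine fun hx m => lt_iff.2 ⟨s, ?_, fun j hj => ?_⟩
    · rwa [zsmul_apply, hx s le_rfl, mul_zero]
    · rw [zsmul_apply, hx j hj.le, mul_zero, hys j hj]
  · intro h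
    by_contra hx
    obtain ⟨t, hxt, hxt0⟩ := exists_mem_filtration_succ_apply_ne_zero (x := x) (by
      rintro rfl; exact hx (zero_mem _))
    have hst : (s : ℕ) ≤ t := by
      by_contra! hts
      exact hx (filtration_mono (by omega) hxt)
    have hyt : 0 ≤ y t := apply_nonneg_of_pos hy (filtration_mono (by omega) hys)
    refine (h (Int.sign (x t) * (y t + 1))).not_gt (lt_iff.2 ⟨t, ?_, fun j hj => ?_⟩)
    · rw [zsmul_apply, mul_right_comm, Int.sign_mul_self_eq_abs]
      nlinarith [Int.one_le_abs hxt0]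
    · rw [zsmul_apply, hxt j hj, mul_zero, hys j (by omega)]

def single (k : Fin n) : LexPow ℤ n := of (Pi.single k 1)

theorem single_apply_self (k : Fin n) : single k k = 1 := Pi.single_eq_same k 1

theorem single_apply_of_ne {k i : Fin n} (h : i ≠ k) : single k i = 0 := Pi.single_eq_of_ne h 1

theorem single_pos (k : Fin n) : 0 < single k :=
  lt_iff.2 ⟨k, by rw [single_apply_self]; exact one_pos,
    fun j hj => (single_apply_of_ne hj.ne').symm⟩

theorem single_mem_filtration {k : Fin n} {m : ℕ} (hkm : (k : ℕ) < m) :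
    single k ∈ filtration m :=
  fun i hi => single_apply_of_ne fun h => by subst h; omega

theorem sub_zsmul_single_mem_filtration {k : Fin n} {x : LexPow ℤ n}
    (hx : x ∈ filtration (k + 1)) : x - x k • single k ∈ filtration k := by
  intro i hi
  change x i - x k * single k i = 0
  rcases hi.eq_or_lt with h | h
  · rw [show i = k from Fin.ext h.symm, single_apply_self, mul_one, sub_self]
  · rw [hx i h, single_apply_of_ne (Fin.ne_of_gt h), mul_zero, sub_zero]

section OrderAutomorphism

variable {α : LexPow ℤ n ≃+ LexPow ℤ n} (hα : StrictMono α)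
include hα

theorem map_pos {y : LexPow ℤ n} (hy : 0 < y) : 0 < α y := by
  simpa using hα hy

theorem mem_filtration_iff_map_mem {y : LexPow ℤ n} (hy : 0 < y) {s t : Fin n}
    (hys : y ∈ filtration (s + 1)) (hs : y s ≠ 0) (hαyt : α y ∈ filtration (t + 1))
    (ht : α y t ≠ 0) {x : LexPow ℤ n} : x ∈ filtration s ↔ α x ∈ filtration t := by
  rw [mem_filtration_iff_forall_zsmul_lt hy hys hs,
    mem_filtration_iff_forall_zsmul_lt (map_pos hα hy) hαyt ht]
  simp only [← map_zsmul, hα.lt_iff_lt]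

/-- `α` maps the convex subgroup `filtration k` onto `filtration (σ k)` for a strictly monotone
`σ : Fin n → Fin n`, which must be the identity. -/
theorem map_mem_filtration_iff (m : ℕ) {x : LexPow ℤ n} :
    α x ∈ filtration m ↔ x ∈ filtration m := by
  have hlead : ∀ k : Fin n, ∃ t : Fin n,
      α (single k) ∈ filtration (t + 1) ∧ α (single k) t ≠ 0 :=
    fun k => exists_mem_filtration_succ_apply_ne_zero (map_pos hα (single_pos k)).ne'
  choose σ hσ hσ0 using hlead
  have hmap : ∀ (k : Fin n) (x : LexPow ℤ n), x ∈ filtration k ↔ α x ∈ filtration (σ k) :=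
    fun k x => mem_filtration_iff_map_mem hα (single_pos k) (single_mem_filtration (by omega))
      (by rw [single_apply_self]; exact one_ne_zero) (hσ k) (hσ0 k)
  have hσ_mono : StrictMono σ := fun k l hkl => by
    by_contra! hle
    exact hσ0 k ((hmap l _).1 (single_mem_filtration hkl) (σ k) hle)
  rcases lt_or_ge m n with hm | hm
  · have := hmap ⟨m, hm⟩ x
    rw [hσ_mono.apply_eq] at this
    exact this.symm
  · simp [filtration_of_le hm]

theorem map_sub_self_mem_filtration {m : ℕ} {x : LexPow ℤ n} (hx : x ∈ filtration (m + 1)) :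
    α x - x ∈ filtration m := by
  rcases lt_or_ge m n with hm | hm
  swap
  · simp [filtration_of_le hm]
  set k : Fin n := ⟨m, hm⟩
  have hαk : α (single k) ∈ filtration (k + 1) :=
    (map_mem_filtration_iff hα _).2 (single_mem_filtration (Nat.lt_succ_self _))
  -- the leading coefficient of `α (single k)` is nonnegative, and it divides `1` because
  -- `α⁻¹ (single k) ∈ filtration (k + 1)` is sent back to `single k`
  have hcoeff : α (single k) k = 1 := by
    set y := α.symm (single k)
    have hy : y ∈ filtration (k + 1) := (map_mem_filtration_iff hα _).1 (by
      rw [α.apply_symm_apply]; exact single_mem_filtration (Nat.lt_succ_self _))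
    have hrest := (map_mem_filtration_iff hα k).2 (sub_zsmul_single_mem_filtration hy) k le_rfl
    rw [map_sub, map_zsmul, α.apply_symm_apply] at hrest
    change single k k - y k * α (single k) k = 0 at hrest
    rw [single_apply_self] at hrest
    exact Int.eq_one_of_mul_eq_one_right
      (apply_nonneg_of_pos (map_pos hα (single_pos k)) hαk) (b := y k) (by linarith)
  have hsingle : α (single k) - single k ∈ filtration k := by
    intro i hi
    change α (single k) i - single k i = 0
    rcases hi.eq_or_lt with h | h
    · rw [show i = k from Fin.ext h.symm, hcoeff, single_apply_self, sub_self]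
    · rw [hαk i h, single_apply_of_ne (Fin.ne_of_gt h), sub_self]
  have hx' := sub_zsmul_single_mem_filtration (k := k) hx
  have hdecomp : α x - x = (α (x - x k • single k) - (x - x k • single k))
      + x k • (α (single k) - single k) := by
    rw [map_sub, map_zsmul, smul_sub]
    abel
  rw [hdecomp]
  exact add_mem (sub_mem ((map_mem_filtration_iff hα k).2 hx') hx') (zsmul_mem hsingle _)

end OrderAutomorphism

end LexPow

namespace OPAffineAut

variable {Λ : Type*} [AddCommGroup Λ] [LinearOrder Λ] [IsOrderedAddMonoid Λ]

theorem apply_eq_dilation_add (f : OPAffineAut Λ) (x : Λ) : f x = f.dilation x + f 0 := by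
  have h := f.affine x 0
  rw [sub_zero] at h
  rw [← h, sub_add_cancel]

theorem coe_pow (f : OPAffineAut Λ) (k : ℕ) : ⇑(f ^ k) = (⇑f)^[k] := by
  induction k with
  | zero => rfl
  | succ k ih => funext x; rw [pow_succ, mul_apply, ih, Function.iterate_succ_apply]

theorem isTorsionFree : Monoid.IsTorsionFree (OPAffineAut Λ) := by
  intro f hf hfin
  obtain ⟨k, hk, hfk⟩ := isOfFinOrder_iff_pow_eq_one.1 hfin
  refine hf (ext' fun x => ?_)
  have hperiodic : (⇑f)^[k] x = id^[k] x := by rw [← coe_pow, hfk, Function.iterate_id]; rfl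
  exact (Function.Commute.iterate_pos_eq_iff_map_eq Function.Commute.id_right
    f.strictMono'.monotone strictMono_id hk).1 hperiodic

/-- On `Λ × {1}`, `linearization f` acts as `f`. -/
def linearization : OPAffineAut Λ →* Module.End ℤ (Λ × ℤ) where
  toFun f :=
    { toFun := fun v => (f.dilation v.1 + v.2 • f 0, v.2)
      map_add' := fun v w => by
        ext
        · simp only [Prod.fst_add, Prod.snd_add, map_add, add_smul]
          abel
        · rfl
      map_smul' := fun c v => by
        ext
        · simp [smul_add, mul_smul]
        · rfl }
  map_one' := LinearMap.ext fun v => Prod.ext (by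
    change v.1 + v.2 • (0 : Λ) = v.1
    rw [smul_zero, add_zero]) rfl
  map_mul' f g := LinearMap.ext fun v => Prod.ext (by
    change f.dilation (g.dilation v.1) + v.2 • f (g 0)
      = f.dilation (g.dilation v.1 + v.2 • g 0) + v.2 • f 0
    rw [apply_eq_dilation_add f (g 0), map_add, map_zsmul, smul_add, add_assoc]) rfl

theorem linearization_apply (f : OPAffineAut Λ) (v : Λ × ℤ) :
    linearization f v = (f.dilation v.1 + v.2 • f 0, v.2) :=
  rfl

theorem linearization_injective : Function.Injective (linearization (Λ := Λ)) :=
  fun f g h => ext' fun x => by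
    have := congrArg Prod.fst (LinearMap.congr_fun h (x, 1))
    simpa [linearization_apply, ← apply_eq_dilation_add] using this

theorem toHomUnits_linearization_injective :
    Function.Injective (linearization (Λ := Λ)).toHomUnits :=
  fun _ _ h => linearization_injective (congrArg Units.val h)

end OPAffineAut

namespace LexPow

variable {n : ℕ}

instance : Module.Free ℤ (LexPow ℤ n) :=
  Module.Free.of_equiv (AddEquiv.toIntLinearEquiv { of with map_add' := fun _ _ => rfl })

instance : Module.Finite ℤ (LexPow ℤ n) :=
  Module.Finite.equiv (AddEquiv.toIntLinearEquiv { of with map_add' := fun _ _ => rfl })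

/-- `filtration` of `ℤ^{n+1}_lex`, with the translation coordinate of `linearization` as the
most significant one. -/
def affineFiltration (n m : ℕ) : AddSubgroup (LexPow ℤ n × ℤ) :=
  if m ≤ n then (filtration m).prod ⊥ else ⊤

theorem affineFiltration_mono : Monotone (affineFiltration n) := by
  intro m m' hmm'
  unfold affineFiltration
  split_ifs
  · exact AddSubgroup.prod_mono (filtration_mono hmm') le_rfl
  · exact le_top
  · omega
  · exact le_rfl

theorem affineFiltration_zero : affineFiltration n 0 = ⊥ := by
  simp [affineFiltration, filtration_zero, AddSubgroup.bot_prod_bot]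

theorem affineFiltration_succ_self : affineFiltration n (n + 1) = ⊤ := by
  simp [affineFiltration]

theorem linearization_sub_one_mem_lowering (f : OPAffineAut (LexPow ℤ n)) :
    OPAffineAut.linearization f - 1 ∈ lowering (affineFiltration n) 1 := by
  intro m v hv
  change (f.dilation v.1 + v.2 • f 0 - v.1, v.2 - v.2) ∈ affineFiltration n m
  rw [sub_self]
  unfold affineFiltration at hv ⊢
  split_ifs at hv ⊢
  · obtain ⟨hv1, hv2⟩ := AddSubgroup.mem_prod.1 hv
    rw [AddSubgroup.mem_bot] at hv2
    rw [hv2, zero_smul, add_zero]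
    exact AddSubgroup.mem_prod.2
      ⟨map_sub_self_mem_filtration f.dilation_strictMono hv1, zero_mem _⟩
  · exact AddSubgroup.mem_prod.2 ⟨by simp [filtration_of_le (by omega : n ≤ m)], zero_mem _⟩
  · omega
  · trivial

theorem toHomUnits_linearization_mem_unitsFiltration (f : OPAffineAut (LexPow ℤ n)) :
    OPAffineAut.linearization.toHomUnits f ∈ unitsFiltration (lowering (affineFiltration n)) 1 :=
  mem_unitsFiltration_of_sub_one_mem (lowering_antitone affineFiltration_mono)
    (linearization_sub_one_mem_lowering f)
    (by rw [← map_inv]; exact linearization_sub_one_mem_lowering f⁻¹)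

end LexPow

/-- If a group admits a faithful orientation-preserving affine action on
`ℤ^n_lex` for some `n`, then it is finitely generated, torsion-free and nilpotent. -/
theorem fg_torsionFree_nilpotent_of_faithful_affineAction
    (G : Type*) [Group G] (n : ℕ) (ρ : G →* OPAffineAut (LexPow ℤ n))
    (hρ : Function.Injective ρ) :
    Group.FG G ∧ Monoid.IsTorsionFree G ∧ Group.IsNilpotent G := by
  open LexPow OPAffineAut in
  have hIbot : lowering (affineFiltration n) (n + 1) = ⊥ :=
    lowering_eq_bot affineFiltration_zero affineFiltration_succ_self
  have hρ' := toHomUnits_linearization_injective.comp hρ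
  have hunip := fun g => toHomUnits_linearization_mem_unitsFiltration (ρ g)
  have : AddGroup.FG (Module.End ℤ (LexPow ℤ n × ℤ)) :=
    Module.Finite.iff_addGroup_fg.1 inferInstance
  exact ⟨fg_of_forall_mem_unitsFiltration (lowering_antitone affineFiltration_mono) hIbot
      (linearization.toHomUnits.comp ρ) hρ' 0 hunip,
    isTorsionFree.of_injective hρ,
    isNilpotent_of_forall_mem_unitsFiltration hIbot (linearization.toHomUnits.comp ρ) hρ' hunip⟩
end

section
/- For every n ∈ ℕ, the group (under composition) of orientation-preserving affine automorphisms of ℤ^n_lex is isomorphic to UT(n+1,ℤ). -/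
section Matrices

variable {R : Type*} {n : ℕ}

theorem diag_mul_of_triangular [CommRing R] {A B : Matrix (Fin n) (Fin n) R}
    (hA : A.BlockTriangular id) (hB : B.BlockTriangular id) (i : Fin n) :
    (A * B) i i = A i i * B i i := by
  rw [Matrix.mul_apply]
  apply Finset.sum_eq_single i
  · intro k _ hk
    rcases lt_or_gt_of_ne hk with h | h
    · rw [hA (show (id : Fin n → Fin n) k < id i from h), zero_mul]
    · rw [hB (show (id : Fin n → Fin n) i < id k from h), mul_zero]
  · intro h; exact absurd (Finset.mem_univ i) h

/-- The group `UT(n,R)` of upper triangular `n × n` matrices over `R` with all diagonal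
entries equal to `1`, realised as a subgroup of the group of units of the matrix ring. -/
def UT (n : ℕ) (R : Type*) [CommRing R] : Subgroup (Matrix (Fin n) (Fin n) R)ˣ where
  carrier := {A | (∀ i j : Fin n, j < i → (A : Matrix (Fin n) (Fin n) R) i j = 0) ∧
    ∀ i : Fin n, (A : Matrix (Fin n) (Fin n) R) i i = 1}
  one_mem' := by
    refine ⟨fun i j hij => ?_, fun i => ?_⟩
    · simp [Matrix.one_apply, (ne_of_lt hij).symm]
    · simp
  mul_mem' := by
    rintro A B ⟨hA1, hA2⟩ ⟨hB1, hB2⟩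
    have hA : (A : Matrix (Fin n) (Fin n) R).BlockTriangular id := fun i j h => hA1 i j h
    have hB : (B : Matrix (Fin n) (Fin n) R).BlockTriangular id := fun i j h => hB1 i j h
    refine ⟨fun i j hij => ?_, fun i => ?_⟩
    · exact (hA.mul hB) (show (id : Fin n → Fin n) j < id i from hij)
    · rw [Units.val_mul, diag_mul_of_triangular hA hB, hA2, hB2, one_mul]
  inv_mem' := by
    rintro A ⟨hA1, hA2⟩
    have hA : (A : Matrix (Fin n) (Fin n) R).BlockTriangular id := fun i j h => hA1 i j h
    haveI := A.invertible
    have hAinv : ((A : Matrix (Fin n) (Fin n) R)⁻¹).BlockTriangular id :=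
      Matrix.blockTriangular_inv_of_blockTriangular hA
    have hcoe : ((A⁻¹ : (Matrix (Fin n) (Fin n) R)ˣ) : Matrix (Fin n) (Fin n) R)
        = (A : Matrix (Fin n) (Fin n) R)⁻¹ := Matrix.coe_units_inv A
    refine ⟨fun i j hij => ?_, fun i => ?_⟩
    · rw [hcoe]; exact hAinv (show (id : Fin n → Fin n) j < id i from hij)
    · have h1 : ((A : Matrix (Fin n) (Fin n) R) * (A : Matrix (Fin n) (Fin n) R)⁻¹) i i = 1 := by
        rw [Matrix.mul_inv_of_invertible]; simp
      rw [diag_mul_of_triangular hA hAinv, hA2, one_mul] at h1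
      rw [hcoe, h1]

/-- The group `T*(n,R)` of upper triangular `n × n` matrices over a linearly ordered field `R`
with positive diagonal entries, realised as a subgroup of the units of the matrix ring. -/
def Tstar (n : ℕ) (R : Type*) [Field R] [LinearOrder R] [IsStrictOrderedRing R] : Subgroup (Matrix (Fin n) (Fin n) R)ˣ where
  carrier := {A | (∀ i j : Fin n, j < i → (A : Matrix (Fin n) (Fin n) R) i j = 0) ∧
    ∀ i : Fin n, 0 < (A : Matrix (Fin n) (Fin n) R) i i}
  one_mem' := by
    refine ⟨fun i j hij => ?_, fun i => ?_⟩
    · simp [Matrix.one_apply, (ne_of_lt hij).symm]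
    · simp
  mul_mem' := by
    rintro A B ⟨hA1, hA2⟩ ⟨hB1, hB2⟩
    have hA : (A : Matrix (Fin n) (Fin n) R).BlockTriangular id := fun i j h => hA1 i j h
    have hB : (B : Matrix (Fin n) (Fin n) R).BlockTriangular id := fun i j h => hB1 i j h
    refine ⟨fun i j hij => ?_, fun i => ?_⟩
    · exact (hA.mul hB) (show (id : Fin n → Fin n) j < id i from hij)
    · rw [Units.val_mul, diag_mul_of_triangular hA hB]
      exact mul_pos (hA2 i) (hB2 i)
  inv_mem' := by
    rintro A ⟨hA1, hA2⟩
    have hA : (A : Matrix (Fin n) (Fin n) R).BlockTriangular id := fun i j h => hA1 i j h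
    haveI := A.invertible
    have hAinv : ((A : Matrix (Fin n) (Fin n) R)⁻¹).BlockTriangular id :=
      Matrix.blockTriangular_inv_of_blockTriangular hA
    have hcoe : ((A⁻¹ : (Matrix (Fin n) (Fin n) R)ˣ) : Matrix (Fin n) (Fin n) R)
        = (A : Matrix (Fin n) (Fin n) R)⁻¹ := Matrix.coe_units_inv A
    refine ⟨fun i j hij => ?_, fun i => ?_⟩
    · rw [hcoe]; exact hAinv (show (id : Fin n → Fin n) j < id i from hij)
    · have h1 : ((A : Matrix (Fin n) (Fin n) R) * (A : Matrix (Fin n) (Fin n) R)⁻¹) i i = 1 := by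
        rw [Matrix.mul_inv_of_invertible]; simp
      rw [diag_mul_of_triangular hA hAinv] at h1
      rw [hcoe]
      rcases lt_trichotomy ((A : Matrix (Fin n) (Fin n) R)⁻¹ i i) 0 with h | h | h
      · exact absurd h1 (by nlinarith [hA2 i])
      · rw [h, mul_zero] at h1; exact absurd h1 zero_ne_one
      · exact h

/-- The last index of `Fin N` (any element of `Fin N` witnesses `0 < N`). -/
def lastOf {N : ℕ} (r : Fin N) : Fin N := ⟨N - 1, Nat.sub_lt r.pos Nat.one_pos⟩

/-- A square matrix `g` (upper triangular, with positive diagonal and bottom-right entry `1`)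
is *essentially hyperbolic* if `g ≠ 1` and there is a row index `r` which is not the last row
such that `(g-1)_{r,N} ≠ 0` (where `N` is the last column) and every nonzero entry of `g - 1`
lies either in a row strictly above `r`, or at position `(r, N)`. -/
def EssentiallyHyperbolic {N : ℕ} {R : Type*} [CommRing R]
    (g : Matrix (Fin N) (Fin N) R) : Prop :=
  g ≠ 1 ∧ ∃ r : Fin N, (r : ℕ) + 1 < N ∧ (g - 1) r (lastOf r) ≠ 0 ∧
    ∀ i j : Fin N, (g - 1) i j ≠ 0 → i < r ∨ (i = r ∧ j = lastOf r)

end Matrices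

instance AddAut.group (A : Type*) [Add A] : Group (AddAut A) where
  mul g h := AddEquiv.trans h g
  one := AddEquiv.refl _
  inv := AddEquiv.symm
  mul_assoc _ _ _ := rfl
  one_mul _ := rfl
  mul_one _ := rfl
  inv_mul_cancel := AddEquiv.self_trans_symm

/-- The group of order-preserving additive automorphisms of a linearly ordered abelian
group `Λ`, as a subgroup of `AddAut Λ`. -/
def orderAddAut (Λ : Type*) [AddCommGroup Λ] [LinearOrder Λ] [IsOrderedAddMonoid Λ] : Subgroup (AddAut Λ) where
  carrier := {f | StrictMono f}
  one_mem' := strictMono_id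
  mul_mem' := by
    intro f g hf hg a b hab
    exact hf (hg hab)
  inv_mem' := by
    intro f hf a b hab
    exact hf.lt_iff_lt.1 (show f (f.symm a) < f (f.symm b) by simpa using hab)


/-!
An order-preserving automorphism `α` of `ℤ^n_lex` preserves the relation "`x ≤ m • y` for some
`m : ℕ`", which on positive vectors compares the positions of their leading coordinates. Hence the
leading positions of `α e₀, …, α eₙ₋₁` increase strictly, so they are `0, …, n - 1`: the matrix
of `α` is upper triangular with positive diagonal. The same holds for `α⁻¹`, so the diagonal
entries are positive units of `ℤ`, i.e. `1`. Conversely, an upper triangular matrix with positive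
diagonal keeps the leading coordinate of a positive vector positive, hence preserves the order.
Since `f x = α x + f 0`, homogeneous coordinates `f ↦ [[α, f 0], [0, 1]]` identify the group
with `UT(n+1, ℤ)`.
-/

namespace LexPow

variable {R : Type*} {n : ℕ}

@[simp] theorem of_apply (x : Fin n → R) (i : Fin n) : of x i = x i := rfl

@[simp] theorem zero_apply [AddCommGroup R] (i : Fin n) : (0 : LexPow R n) i = 0 := rfl

@[simp] theorem nsmul_apply [AddCommGroup R] (m : ℕ) (x : LexPow R n) (i : Fin n) :
    (m • x) i = m • x i := rfl

def PosLeadingAt [Zero R] [LT R] (x : LexPow R n) (k : Fin n) : Prop :=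
  0 < x k ∧ ∀ j, k < j → x j = 0

theorem posLeadingAt_single [Zero R] [LT R] {a : R} (ha : 0 < a) (k : Fin n) :
    PosLeadingAt (of (Pi.single k a)) k :=
  ⟨by simpa using ha, fun j hj => by simp [hj.ne']⟩

section Order

variable [AddCommGroup R] [LinearOrder R] [IsOrderedAddMonoid R]

theorem lt_iff_exists {x y : LexPow R n} :
    x < y ↔ ∃ k, x k < y k ∧ ∀ j, k < j → x j = y j := by
  change toRevLex x < toRevLex y ↔ _
  refine Fin.revPerm.exists_congr fun k => ?_
  rw [and_comm]
  refine and_congr Iff.rfl (Fin.revPerm.forall_congr fun j => ?_)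
  simp only [Fin.revPerm_apply, Fin.rev_lt_rev]
  rfl

theorem pos_iff_exists_posLeadingAt {x : LexPow R n} : 0 < x ↔ ∃ k, PosLeadingAt x k := by
  simp only [lt_iff_exists, PosLeadingAt, zero_apply, eq_comm (a := (0 : R))]

theorem PosLeadingAt.pos {x : LexPow R n} {k : Fin n} (hx : PosLeadingAt x k) : 0 < x :=
  pos_iff_exists_posLeadingAt.2 ⟨k, hx⟩

theorem PosLeadingAt.le_iff_exists_le_nsmul [Archimedean R] {x y : LexPow R n} {k l : Fin n}
    (hx : PosLeadingAt x k) (hy : PosLeadingAt y l) : k ≤ l ↔ ∃ m : ℕ, x ≤ m • y := by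
  constructor
  · intro hkl
    obtain ⟨m, hm⟩ := Archimedean.arch (x l) hy.1
    refine ⟨m + 1, (lt_iff_exists.2 ⟨l, ?_, fun j hj => ?_⟩).le⟩
    · rw [nsmul_apply, succ_nsmul]
      exact lt_add_of_le_of_pos hm hy.1
    · rw [nsmul_apply, hy.2 j hj, hx.2 j (hkl.trans_lt hj), smul_zero]
  · rintro ⟨m, hm⟩
    by_contra! hlk
    refine hm.not_gt (lt_iff_exists.2 ⟨k, ?_, fun j hj => ?_⟩)
    · rw [nsmul_apply, hy.2 k hlk, smul_zero]
      exact hx.1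
    · rw [nsmul_apply, hy.2 j (hlk.trans hj), hx.2 j hj, smul_zero]

theorem posLeadingAt_map_single [Archimedean R] {α : LexPow R n →+ LexPow R n}
    (hα : StrictMono α) {a : R} (ha : 0 < a) (k : Fin n) :
    PosLeadingAt (α (of (Pi.single k a))) k := by
  have hpos (j : Fin n) : 0 < α (of (Pi.single j a)) :=
    map_zero α ▸ hα (posLeadingAt_single ha j).pos
  choose σ hσ using fun j => pos_iff_exists_posLeadingAt.1 (hpos j)
  have hσ_mono : StrictMono σ := strictMono_of_le_iff_le fun i j => by
    rw [(posLeadingAt_single ha i).le_iff_exists_le_nsmul (posLeadingAt_single ha j),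
      (hσ i).le_iff_exists_le_nsmul (hσ j)]
    simp only [← map_nsmul, hα.le_iff_le]
  have hσ_id : σ = id := by
    refine (hσ_mono.range_inj strictMono_id).1 ?_
    rw [Set.range_id, (Finite.injective_iff_surjective.1 hσ_mono.injective).range_eq]
  simpa [hσ_id] using hσ k

end Order

section Triangular

open Matrix

variable [Ring R] [LinearOrder R] [IsStrictOrderedRing R] {A : Matrix (Fin n) (Fin n) R}

theorem PosLeadingAt.mulVec (hA : A.IsUpperTriangular) {x : LexPow R n} {k : Fin n}
    (hAk : 0 < A k k) (hx : PosLeadingAt x k) : PosLeadingAt (of (A *ᵥ x)) k := by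
  have hterm (j m : Fin n) (hjm : m < j ∨ k < m) : A j m * x m = 0 := by
    rcases hjm with hjm | hkm
    · rw [hA hjm, zero_mul]
    · rw [hx.2 m hkm, mul_zero]
  refine ⟨?_, fun j hkj => show ∑ m, A j m * x m = 0 from Finset.sum_eq_zero fun m _ =>
    hterm j m ((lt_or_ge m j).imp_right hkj.trans_le)⟩
  change 0 < ∑ m, A k m * x m
  rw [Finset.sum_eq_single k (fun m _ hmk => hterm k m (lt_or_gt_of_ne hmk))
    (fun h => absurd (Finset.mem_univ k) h)]
  exact mul_pos hAk hx.1

theorem strictMono_mulVec (hA : A.IsUpperTriangular) (hdiag : ∀ i, 0 < A i i) :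
    StrictMono fun x : LexPow R n => of (A *ᵥ x) := fun x y hxy => by
  obtain ⟨k, hk⟩ := pos_iff_exists_posLeadingAt.1 (sub_pos.2 hxy)
  have hsub : of (A *ᵥ (y - x)) = of (A *ᵥ y) - of (A *ᵥ x) := Matrix.mulVec_sub A y x
  simpa only [hsub, sub_pos] using (hk.mulVec hA (hdiag k)).pos

end Triangular

end LexPow

namespace Matrix

variable {R : Type*} {n : ℕ}

section Semiring

variable [Semiring R]

/-- The matrix `[[A, b], [0, 1]]` of the affine map `x ↦ A x + b` in homogeneous coordinates. -/
def ofAffine (A : Matrix (Fin n) (Fin n) R) (b : Fin n → R) :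
    Matrix (Fin (n + 1)) (Fin (n + 1)) R :=
  of fun i j => Fin.lastCases (Fin.lastCases 1 (fun _ => 0) j)
    (fun i => Fin.lastCases (b i) (fun j => A i j) j) i

variable (A A' : Matrix (Fin n) (Fin n) R) (b b' : Fin n → R)

@[simp] theorem ofAffine_castSucc_castSucc (i j : Fin n) :
    ofAffine A b i.castSucc j.castSucc = A i j := by simp [ofAffine]

@[simp] theorem ofAffine_castSucc_last (i : Fin n) :
    ofAffine A b i.castSucc (Fin.last n) = b i := by simp [ofAffine]

@[simp] theorem ofAffine_last_castSucc (j : Fin n) :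
    ofAffine A b (Fin.last n) j.castSucc = 0 := by simp [ofAffine]

@[simp] theorem ofAffine_last_last : ofAffine A b (Fin.last n) (Fin.last n) = 1 := by
  simp [ofAffine]

theorem ofAffine_mul : ofAffine A b * ofAffine A' b' = ofAffine (A * A') (A *ᵥ b' + b) := by
  ext i j
  rw [mul_apply, Fin.sum_univ_castSucc]
  induction i using Fin.lastCases <;> induction j using Fin.lastCases <;>
    simp [mul_apply, mulVec, dotProduct]

theorem ofAffine_one_zero : ofAffine (1 : Matrix (Fin n) (Fin n) R) 0 = 1 := by
  ext i j
  induction i using Fin.lastCases <;> induction j using Fin.lastCases <;>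
    simp [one_apply, Fin.castSucc_ne_last, (Fin.castSucc_ne_last _).symm]

theorem ofAffine_inj : ofAffine A b = ofAffine A' b' ↔ A = A' ∧ b = b' := by
  refine ⟨fun h => ⟨?_, ?_⟩, fun h => h.1 ▸ h.2 ▸ rfl⟩
  · ext i j
    simpa using congr_fun₂ h i.castSucc j.castSucc
  · ext i
    simpa using congr_fun₂ h i.castSucc (Fin.last n)

theorem eq_ofAffine {M : Matrix (Fin (n + 1)) (Fin (n + 1)) R}
    (hM : ∀ j, M (Fin.last n) j = (1 : Matrix _ _ R) (Fin.last n) j) :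
    M = ofAffine (M.submatrix Fin.castSucc Fin.castSucc) fun i => M i.castSucc (Fin.last n) := by
  ext i j
  induction i using Fin.lastCases <;> induction j using Fin.lastCases <;>
    simp [hM, (Fin.castSucc_ne_last _).symm]

variable {A}

theorem isUpperTriangular_ofAffine (hA : A.IsUpperTriangular) :
    (ofAffine A b).IsUpperTriangular := by
  intro i j hij
  induction i using Fin.lastCases <;> induction j using Fin.lastCases
  · exact absurd hij (lt_irrefl _)
  · simp
  · exact absurd hij (Fin.castSucc_lt_last _).not_gt
  · simpa using hA (Fin.castSucc_lt_castSucc_iff.1 hij)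

theorem ofAffine_diag (hA : ∀ i, A i i = 1) (i : Fin (n + 1)) : ofAffine A b i i = 1 := by
  induction i using Fin.lastCases <;> simp [hA]

end Semiring

theorem eq_ofAffine_of_mem_UT [CommRing R] {U : (Matrix (Fin (n + 1)) (Fin (n + 1)) R)ˣ}
    (hU : U ∈ UT (n + 1) R) :
    U.val = ofAffine (U.val.submatrix Fin.castSucc Fin.castSucc)
      fun i => U.val i.castSucc (Fin.last n) := by
  refine eq_ofAffine fun j => ?_
  induction j using Fin.lastCases
  · simp [hU.2]
  · simp [hU.1 _ _ (Fin.castSucc_lt_last _), (Fin.castSucc_ne_last _).symm]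

end Matrix

namespace OPAffineAut

section General

variable {Λ : Type*} [AddCommGroup Λ] [LinearOrder Λ] [IsOrderedAddMonoid Λ]

def ofAddEquiv (α : Λ ≃+ Λ) (hα : StrictMono α) (b : Λ) : OPAffineAut Λ where
  toEquiv := α.toEquiv.trans (Equiv.addRight b)
  strictMono' _ _ h := add_lt_add_left (hα h) b
  dilation := α
  dilation_strictMono := hα
  affine x y := by simp [map_sub]

end General

open Matrix

variable {n : ℕ}

def dilationLinearMap (f : OPAffineAut (LexPow ℤ n)) : (Fin n → ℤ) →ₗ[ℤ] (Fin n → ℤ) :=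
  AddMonoidHom.toIntLinearMap f.dilation.toAddMonoidHom

def linearMatrix (f : OPAffineAut (LexPow ℤ n)) : Matrix (Fin n) (Fin n) ℤ :=
  LinearMap.toMatrix' f.dilationLinearMap

theorem linearMatrix_apply (f : OPAffineAut (LexPow ℤ n)) (i j : Fin n) :
    f.linearMatrix i j = f.dilation (LexPow.of (Pi.single j 1)) i :=
  LinearMap.toMatrix'_apply _ i j

theorem linearMatrix_mulVec (f : OPAffineAut (LexPow ℤ n)) (x : LexPow ℤ n) :
    f.linearMatrix *ᵥ x = f.dilation x :=
  LinearMap.toMatrix'_mulVec _ x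

theorem linearMatrix_mul (f g : OPAffineAut (LexPow ℤ n)) :
    (f * g).linearMatrix = f.linearMatrix * g.linearMatrix :=
  LinearMap.toMatrix'_comp f.dilationLinearMap g.dilationLinearMap

theorem linearMatrix_one : (1 : OPAffineAut (LexPow ℤ n)).linearMatrix = 1 :=
  LinearMap.toMatrix'_id

theorem posLeadingAt_dilation_single (f : OPAffineAut (LexPow ℤ n)) (j : Fin n) :
    LexPow.PosLeadingAt (f.dilation (LexPow.of (Pi.single j 1))) j :=
  LexPow.posLeadingAt_map_single (α := f.dilation.toAddMonoidHom) f.dilation_strictMono one_pos j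

theorem linearMatrix_isUpperTriangular (f : OPAffineAut (LexPow ℤ n)) :
    f.linearMatrix.IsUpperTriangular := fun i j hij => by
  rw [linearMatrix_apply]
  exact (f.posLeadingAt_dilation_single j).2 i hij

theorem linearMatrix_diag (f : OPAffineAut (LexPow ℤ n)) (i : Fin n) :
    f.linearMatrix i i = 1 := by
  have hpos : 0 < f.linearMatrix i i := by
    rw [linearMatrix_apply]
    exact (f.posLeadingAt_dilation_single i).1
  have h := diag_mul_of_triangular f.linearMatrix_isUpperTriangular
    f⁻¹.linearMatrix_isUpperTriangular i
  rw [← linearMatrix_mul, mul_inv_cancel, linearMatrix_one, one_apply_eq] at h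
  exact Int.eq_one_of_mul_eq_one_right hpos.le h.symm

def toMatrix (f : OPAffineAut (LexPow ℤ n)) : Matrix (Fin (n + 1)) (Fin (n + 1)) ℤ :=
  ofAffine f.linearMatrix (f 0)

theorem toMatrix_mul (f g : OPAffineAut (LexPow ℤ n)) :
    (f * g).toMatrix = f.toMatrix * g.toMatrix := by
  -- `LexPow ℤ n` is only definitionally `Fin n → ℤ`: the `show` selects the addition of the latter.
  have hb : (f * g) 0 = f.linearMatrix *ᵥ g 0 + show Fin n → ℤ from f 0 := by
    rw [linearMatrix_mulVec]
    exact apply_eq_dilation_add f (g 0)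
  exact (congrArg₂ ofAffine (linearMatrix_mul f g) hb).trans (ofAffine_mul _ _ _ _).symm

theorem toMatrix_one : (1 : OPAffineAut (LexPow ℤ n)).toMatrix = 1 :=
  (congrArg₂ ofAffine linearMatrix_one rfl).trans ofAffine_one_zero

theorem toMatrix_injective : Function.Injective (toMatrix (n := n)) := fun f g h => by
  obtain ⟨hA, hb⟩ := (ofAffine_inj _ _ _ _).1 h
  refine ext' fun x => ?_
  rw [apply_eq_dilation_add, apply_eq_dilation_add g, ← linearMatrix_mulVec, ← linearMatrix_mulVec,
    hA, hb]

def toMatrixHom : OPAffineAut (LexPow ℤ n) →* Matrix (Fin (n + 1)) (Fin (n + 1)) ℤ where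
  toFun := toMatrix
  map_one' := toMatrix_one
  map_mul' := toMatrix_mul

theorem exists_toMatrix_eq {U : (Matrix (Fin (n + 1)) (Fin (n + 1)) ℤ)ˣ} (hU : U ∈ UT (n + 1) ℤ) :
    ∃ f : OPAffineAut (LexPow ℤ n), f.toMatrix = U := by
  set A := U.val.submatrix Fin.castSucc Fin.castSucc
  set b : Fin n → ℤ := fun i => U.val i.castSucc (Fin.last n)
  have hUA : U.val = ofAffine A b := eq_ofAffine_of_mem_UT hU
  have hA : A.IsUpperTriangular := fun i j hij =>
    hU.1 _ _ (Fin.castSucc_lt_castSucc_iff.2 hij)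
  have hAdiag (i : Fin n) : A i i = 1 := hU.2 i.castSucc
  have hdet : IsUnit A.det := by simp [det_of_isUpperTriangular hA, hAdiag]
  let α : LexPow ℤ n ≃+ LexPow ℤ n := (A.toLinearEquiv' (A.invertibleOfIsUnitDet hdet)).toAddEquiv
  have hα : StrictMono α :=
    LexPow.strictMono_mulVec (A := A) hA fun i => (hAdiag i).symm ▸ one_pos
  refine ⟨ofAddEquiv α hα b, hUA ▸ congrArg₂ ofAffine ?_ ?_⟩
  · ext i j
    rw [linearMatrix_apply]
    change (A *ᵥ Pi.single j 1) i = A i j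
    rw [mulVec_single_one, col_apply]
  · change α 0 + LexPow.of b = b
    rw [map_zero, zero_add]
    rfl

theorem range_toHomUnits_toMatrixHom :
    (toMatrixHom (n := n)).toHomUnits.range = UT (n + 1) ℤ := by
  ext U
  constructor
  · rintro ⟨f, rfl⟩
    exact ⟨fun _ _ hij => isUpperTriangular_ofAffine _ f.linearMatrix_isUpperTriangular hij,
      ofAffine_diag _ f.linearMatrix_diag⟩
  · intro hU
    obtain ⟨f, hf⟩ := exists_toMatrix_eq hU
    exact ⟨f, Units.ext hf⟩

end OPAffineAut

/-- The group of orientation-preserving affine automorphisms of `ℤ^n_lex`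
is isomorphic to `UT(n+1, ℤ)`. -/
theorem opAffineAut_lexPow_int_mulEquiv_UT (n : ℕ) :
    Nonempty (OPAffineAut (LexPow ℤ n) ≃* UT (n + 1) ℤ) := by
  have hinj : Function.Injective (OPAffineAut.toMatrixHom (n := n)).toHomUnits :=
    fun _ _ h => OPAffineAut.toMatrix_injective (congrArg Units.val h)
  exact ⟨(MonoidHom.ofInjective hinj).trans
    (MulEquiv.subgroupCongr OPAffineAut.range_toHomUnits_toMatrixHom)⟩
end

section
/- For all n×n strictly upper triangular rational matrices x and y, the product x·y satisfies x·y − y·x = xy − yx (the left symmetric product is compatible with the Lie bracket). -/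
section LeftSymmetric

variable {n : ℕ}

/-- The `i`-th superdiagonal component of a square matrix: the matrix whose `(k,l)` entry is
`x k l` if `l = k + i` and `0` otherwise. -/
def superdiag (x : Matrix (Fin n) (Fin n) ℚ) (i : ℕ) : Matrix (Fin n) (Fin n) ℚ :=
  Matrix.of fun k l => if (l : ℕ) = (k : ℕ) + i then x k l else 0

/-- A square matrix is strictly upper triangular if all entries on and below the main
diagonal vanish. -/
def StrictlyUpperTriangular (x : Matrix (Fin n) (Fin n) ℚ) : Prop :=
  ∀ k l : Fin n, (l : ℕ) ≤ (k : ℕ) → x k l = 0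

/-- The left symmetric product associated to the grading of the strictly upper triangular
matrices by superdiagonals:
`x · y = ∑_{i=1}^{n-1} ∑_{j=1}^{n-1} (j/(i+j)) (x⁽ⁱ⁾ y⁽ʲ⁾ - y⁽ʲ⁾ x⁽ⁱ⁾)`. -/
def lsMul (x y : Matrix (Fin n) (Fin n) ℚ) : Matrix (Fin n) (Fin n) ℚ :=
  ∑ i ∈ Finset.Icc 1 (n - 1), ∑ j ∈ Finset.Icc 1 (n - 1),
    ((j : ℚ) / ((i : ℚ) + (j : ℚ))) •
      (superdiag x i * superdiag y j - superdiag y j * superdiag x i)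

end LeftSymmetric

/-! A strictly upper triangular `x` is the sum of its superdiagonals `xᵢ`, and
`x·y = ∑ᵢⱼ cᵢⱼ [xᵢ, yⱼ]` with `cᵢⱼ = j/(i+j)`. By antisymmetry of the commutator,
`x·y - y·x = ∑ᵢⱼ (cᵢⱼ + cⱼᵢ) [xᵢ, yⱼ]`, and `cᵢⱼ + cⱼᵢ = 1`, so this is
`[∑ᵢ xᵢ, ∑ⱼ yⱼ] = [x, y]`. -/

open Finset

theorem sum_sum_smul_commutator_sub_sum_sum_smul_commutator {R A ι : Type*} [Semiring R]
    [Ring A] [Module R A] (s : Finset ι) (c : ι → ι → R) (hc : ∀ i ∈ s, ∀ j ∈ s, c i j + c j i = 1)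
    (a b : ι → A) :
    ∑ i ∈ s, ∑ j ∈ s, c i j • (a i * b j - b j * a i) -
        ∑ i ∈ s, ∑ j ∈ s, c i j • (b i * a j - a j * b i) =
      (∑ i ∈ s, a i) * ∑ j ∈ s, b j - (∑ j ∈ s, b j) * ∑ i ∈ s, a i := by
  rw [sum_mul_sum, sum_mul_sum, sum_comm (s := s) (t := s) (f := fun j i => b j * a i),
    sum_comm (s := s) (t := s) (f := fun i j => c i j • (b i * a j - a j * b i))]
  simp only [← sum_sub_distrib]
  refine sum_congr rfl fun i hi => sum_congr rfl fun j hj => ?_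
  rw [← neg_sub (a i * b j), smul_neg, sub_neg_eq_add, ← add_smul, hc i hi j hj, one_smul]

theorem div_add_add_div_add {K : Type*} [DivisionRing K] {a b : K} (h : a + b ≠ 0) :
    b / (a + b) + a / (b + a) = 1 := by
  rw [add_comm b a, ← add_div, add_comm b a, div_self h]

theorem StrictlyUpperTriangular.sum_superdiag {n : ℕ} {x : Matrix (Fin n) (Fin n) ℚ}
    (hx : StrictlyUpperTriangular x) : ∑ i ∈ Icc 1 (n - 1), superdiag x i = x := by
  ext k l
  simp only [Matrix.sum_apply, superdiag, Matrix.of_apply]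
  by_cases hkl : (k : ℕ) < l
  · rw [sum_eq_single_of_mem ((l : ℕ) - k) (mem_Icc.mpr (by omega))
      fun i _ hi => if_neg (by omega), if_pos (by omega)]
  · rw [hx k l (by omega)]
    exact sum_eq_zero fun i hi => if_neg (by rw [mem_Icc] at hi; omega)

/-- The left symmetric product on strictly upper triangular rational
matrices is compatible with the Lie bracket: `x·y − y·x = xy − yx`. -/
theorem lsMul_compatible_with_bracket (n : ℕ) (x y : Matrix (Fin n) (Fin n) ℚ)
    (hx : StrictlyUpperTriangular x) (hy : StrictlyUpperTriangular y) :
    lsMul x y - lsMul y x = x * y - y * x := by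
  have hc : ∀ i ∈ Icc 1 (n - 1), ∀ j ∈ Icc 1 (n - 1),
      (j : ℚ) / (i + j) + (i : ℚ) / (j + i) = 1 := fun i hi j _ =>
    div_add_add_div_add (by have := (mem_Icc.mp hi).1; positivity)
  rw [lsMul, lsMul, sum_sum_smul_commutator_sub_sum_sum_smul_commutator _
      (fun i j : ℕ => (j : ℚ) / (i + j)) hc (superdiag x) (superdiag y),
    hx.sum_superdiag, hy.sum_superdiag]
end

section
/- For all n×n strictly upper triangular rational matrices x, y and z, the product x·y is left symmetric: (x·y)·z − x·(y·z) = (y·x)·z − y·(x·z). -/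
namespace LSAux

variable {n : ℕ}

/-- The grading derivation: multiply the `(k,l)` entry by `l - k`. -/
def Dop (x : Matrix (Fin n) (Fin n) ℚ) : Matrix (Fin n) (Fin n) ℚ :=
  Matrix.of fun k l => (((l : ℕ) : ℚ) - ((k : ℕ) : ℚ)) * x k l

/-- The inverse of the grading derivation (as a linear map). -/
def Eop : Matrix (Fin n) (Fin n) ℚ →ₗ[ℚ] Matrix (Fin n) (Fin n) ℚ where
  toFun x := Matrix.of fun k l =>
    if (k : ℕ) < (l : ℕ) then x k l / (((l : ℕ) : ℚ) - ((k : ℕ) : ℚ)) else 0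
  map_add' a b := by
    ext k l
    simp only [Matrix.of_apply, Matrix.add_apply]
    split <;> simp [add_div]
  map_smul' c a := by
    ext k l
    simp only [Matrix.of_apply, Matrix.smul_apply, smul_eq_mul, RingHom.id_apply]
    split <;> simp [mul_div_assoc]

lemma Eop_apply (x : Matrix (Fin n) (Fin n) ℚ) (k l : Fin n) :
    Eop x k l = if (k : ℕ) < (l : ℕ) then x k l / (((l : ℕ) : ℚ) - ((k : ℕ) : ℚ)) else 0 := rfl

lemma sut_E (x : Matrix (Fin n) (Fin n) ℚ) : StrictlyUpperTriangular (Eop x) := by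
  intro k l h
  rw [Eop_apply, if_neg (by omega)]

lemma sut_mul {A B : Matrix (Fin n) (Fin n) ℚ} (hA : StrictlyUpperTriangular A)
    (hB : StrictlyUpperTriangular B) : StrictlyUpperTriangular (A * B) := by
  intro k l h
  rw [Matrix.mul_apply]
  apply Finset.sum_eq_zero
  intro m _
  by_cases hm : (m : ℕ) ≤ (k : ℕ)
  · rw [hA k m hm, zero_mul]
  · rw [hB m l (by omega), mul_zero]

lemma sut_sub {A B : Matrix (Fin n) (Fin n) ℚ} (hA : StrictlyUpperTriangular A)
    (hB : StrictlyUpperTriangular B) : StrictlyUpperTriangular (A - B) := by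
  intro k l h
  rw [Matrix.sub_apply, hA k l h, hB k l h, sub_zero]

lemma sut_D {A : Matrix (Fin n) (Fin n) ℚ} (hA : StrictlyUpperTriangular A) :
    StrictlyUpperTriangular (Dop A) := by
  intro k l h
  show _ * A k l = 0
  rw [hA k l h, mul_zero]

lemma D_mul (A B : Matrix (Fin n) (Fin n) ℚ) :
    Dop (A * B) = Dop A * B + A * Dop B := by
  ext k l
  simp only [Dop, Matrix.of_apply, Matrix.add_apply, Matrix.mul_apply]
  rw [Finset.mul_sum, ← Finset.sum_add_distrib]
  apply Finset.sum_congr rfl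
  intro m _
  ring

lemma D_sub (A B : Matrix (Fin n) (Fin n) ℚ) : Dop (A - B) = Dop A - Dop B := by
  ext k l
  simp only [Dop, Matrix.of_apply, Matrix.sub_apply]
  ring

lemma D_E {A : Matrix (Fin n) (Fin n) ℚ} (hA : StrictlyUpperTriangular A) :
    Dop (Eop A) = A := by
  ext k l
  by_cases hkl : (k : ℕ) < (l : ℕ)
  · have hne : ((l : ℕ) : ℚ) - ((k : ℕ) : ℚ) ≠ 0 := by
      have : ((k : ℕ) : ℚ) < ((l : ℕ) : ℚ) := by exact_mod_cast hkl
      linarith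
    simp only [Dop, Matrix.of_apply, Eop_apply, if_pos hkl]
    field_simp
  · simp only [Dop, Matrix.of_apply, Eop_apply, if_neg hkl, mul_zero]
    exact (hA k l (by omega)).symm

lemma E_D {A : Matrix (Fin n) (Fin n) ℚ} (hA : StrictlyUpperTriangular A) :
    Eop (Dop A) = A := by
  ext k l
  by_cases hkl : (k : ℕ) < (l : ℕ)
  · have hne : ((l : ℕ) : ℚ) - ((k : ℕ) : ℚ) ≠ 0 := by
      have : ((k : ℕ) : ℚ) < ((l : ℕ) : ℚ) := by exact_mod_cast hkl
      linarith
    simp only [Eop_apply, if_pos hkl, Dop, Matrix.of_apply]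
    field_simp
  · simp only [Eop_apply, if_neg hkl]
    exact (hA k l (by omega)).symm

lemma sum_superdiag {x : Matrix (Fin n) (Fin n) ℚ} (hx : StrictlyUpperTriangular x) :
    ∑ i ∈ Finset.Icc 1 (n - 1), superdiag x i = x := by
  ext k l
  rw [Matrix.sum_apply]
  by_cases hkl : (k : ℕ) < (l : ℕ)
  · have hl : (l : ℕ) < n := l.isLt
    rw [Finset.sum_eq_single_of_mem ((l : ℕ) - (k : ℕ))
      (Finset.mem_Icc.mpr ⟨by omega, by omega⟩)]
    · simp only [superdiag, Matrix.of_apply]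
      rw [if_pos (by omega)]
    · intro b _ hb
      simp only [superdiag, Matrix.of_apply]
      rw [if_neg (by omega)]
  · rw [hx k l (by omega)]
    apply Finset.sum_eq_zero
    intro i hi
    have := Finset.mem_Icc.mp hi
    simp only [superdiag, Matrix.of_apply]
    rw [if_neg (by omega)]

lemma sum_smul_superdiag {y : Matrix (Fin n) (Fin n) ℚ} (hy : StrictlyUpperTriangular y) :
    ∑ j ∈ Finset.Icc 1 (n - 1), ((j : ℚ)) • superdiag y j = Dop y := by
  ext k l
  rw [Matrix.sum_apply]
  by_cases hkl : (k : ℕ) < (l : ℕ)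
  · have hl : (l : ℕ) < n := l.isLt
    rw [Finset.sum_eq_single_of_mem ((l : ℕ) - (k : ℕ))
      (Finset.mem_Icc.mpr ⟨by omega, by omega⟩)]
    · simp only [superdiag, Matrix.smul_apply, Matrix.of_apply, smul_eq_mul]
      rw [if_pos (by omega)]
      show _ = (((l : ℕ) : ℚ) - ((k : ℕ) : ℚ)) * y k l
      congr 1
      push_cast [Nat.cast_sub (le_of_lt hkl)]
      ring
    · intro b _ hb
      simp only [superdiag, Matrix.smul_apply, Matrix.of_apply, smul_eq_mul]
      rw [if_neg (by omega), mul_zero]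
  · show _ = (((l : ℕ) : ℚ) - ((k : ℕ) : ℚ)) * y k l
    rw [hy k l (by omega), mul_zero]
    apply Finset.sum_eq_zero
    intro i hi
    have := Finset.mem_Icc.mp hi
    simp only [superdiag, Matrix.smul_apply, Matrix.of_apply, smul_eq_mul]
    rw [if_neg (by omega), mul_zero]

lemma E_prod (x y : Matrix (Fin n) (Fin n) ℚ) (i j : ℕ) (hi : 1 ≤ i) (hj : 1 ≤ j) :
    Eop (superdiag x i * superdiag y j) =
      ((i : ℚ) + (j : ℚ))⁻¹ • (superdiag x i * superdiag y j) := by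
  ext k l
  by_cases h : (l : ℕ) = (k : ℕ) + (i + j)
  · have hkl : (k : ℕ) < (l : ℕ) := by omega
    have hc : ((l : ℕ) : ℚ) - ((k : ℕ) : ℚ) = (i : ℚ) + (j : ℚ) := by
      rw [h]; push_cast; ring
    rw [Eop_apply, if_pos hkl, hc, Matrix.smul_apply, smul_eq_mul, div_eq_inv_mul]
  · have hz : (superdiag x i * superdiag y j) k l = 0 := by
      rw [Matrix.mul_apply]
      apply Finset.sum_eq_zero
      intro m _
      simp only [superdiag, Matrix.of_apply]
      split_ifs with h1 h2
      · exact absurd (by omega) h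
      · rw [mul_zero]
      · rw [zero_mul]
      · rw [zero_mul]
    rw [Eop_apply, Matrix.smul_apply, smul_eq_mul, hz, mul_zero]
    split <;> simp

lemma key {x y : Matrix (Fin n) (Fin n) ℚ} (hx : StrictlyUpperTriangular x)
    (hy : StrictlyUpperTriangular y) :
    lsMul x y = Eop (x * Dop y - Dop y * x) := by
  have h1 : x * Dop y - Dop y * x =
      ∑ i ∈ Finset.Icc 1 (n - 1), ∑ j ∈ Finset.Icc 1 (n - 1),
        ((j : ℚ)) • (superdiag x i * superdiag y j - superdiag y j * superdiag x i) := by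
    calc x * Dop y - Dop y * x
        = (∑ i ∈ Finset.Icc 1 (n - 1), superdiag x i) *
            (∑ j ∈ Finset.Icc 1 (n - 1), ((j : ℚ)) • superdiag y j) -
          (∑ j ∈ Finset.Icc 1 (n - 1), ((j : ℚ)) • superdiag y j) *
            (∑ i ∈ Finset.Icc 1 (n - 1), superdiag x i) := by
            rw [sum_superdiag hx, sum_smul_superdiag hy]
      _ = _ := by
            rw [Finset.sum_mul_sum, Finset.sum_mul_sum]
            rw [show (∑ j ∈ Finset.Icc 1 (n - 1), ∑ i ∈ Finset.Icc 1 (n - 1),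
                (((j : ℚ)) • superdiag y j) * superdiag x i) =
              ∑ i ∈ Finset.Icc 1 (n - 1), ∑ j ∈ Finset.Icc 1 (n - 1),
                (((j : ℚ)) • superdiag y j) * superdiag x i from Finset.sum_comm]
            rw [← Finset.sum_sub_distrib]
            apply Finset.sum_congr rfl; intro i _
            rw [← Finset.sum_sub_distrib]
            apply Finset.sum_congr rfl; intro j _
            rw [mul_smul_comm, smul_mul_assoc, ← smul_sub]
  rw [h1, map_sum]
  unfold lsMul
  apply Finset.sum_congr rfl; intro i hi
  rw [map_sum]
  apply Finset.sum_congr rfl; intro j hj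
  have hi1 := (Finset.mem_Icc.mp hi).1
  have hj1 := (Finset.mem_Icc.mp hj).1
  rw [map_smul, map_sub, E_prod x y i j hi1 hj1, E_prod y x j i hj1 hi1,
    show (j : ℚ) + (i : ℚ) = (i : ℚ) + (j : ℚ) from add_comm _ _, ← smul_sub,
    smul_smul, div_eq_mul_inv, mul_comm]

end LSAux

open LSAux in
/-- The product `x·y` on strictly upper triangular rational matrices is
left symmetric: `(x·y)·z − x·(y·z) = (y·x)·z − y·(x·z)`. -/
theorem lsMul_leftSymmetric (n : ℕ) (x y z : Matrix (Fin n) (Fin n) ℚ)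
    (hx : StrictlyUpperTriangular x) (hy : StrictlyUpperTriangular y)
    (hz : StrictlyUpperTriangular z) :
    lsMul (lsMul x y) z - lsMul x (lsMul y z) = lsMul (lsMul y x) z - lsMul y (lsMul x z) := by
  have hDz := sut_D hz
  have hxy : StrictlyUpperTriangular (lsMul x y) := by
    rw [key hx hy]; exact sut_E _
  have hyx : StrictlyUpperTriangular (lsMul y x) := by
    rw [key hy hx]; exact sut_E _
  have hB : StrictlyUpperTriangular (y * Dop z - Dop z * y) :=
    sut_sub (sut_mul hy hDz) (sut_mul hDz hy)
  have hC : StrictlyUpperTriangular (x * Dop z - Dop z * x) :=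
    sut_sub (sut_mul hx hDz) (sut_mul hDz hx)
  have hPQ : Eop (x * Dop y - Dop y * x) - Eop (y * Dop x - Dop x * y) = x * y - y * x := by
    rw [← map_sub]
    have h : (x * Dop y - Dop y * x) - (y * Dop x - Dop x * y) = Dop (x * y - y * x) := by
      rw [D_sub, D_mul, D_mul]; noncomm_ring
    rw [h, E_D (sut_sub (sut_mul hx hy) (sut_mul hy hx))]
  have hyz : StrictlyUpperTriangular (lsMul y z) := by
    rw [key hy hz]; exact sut_E _
  have hxz : StrictlyUpperTriangular (lsMul x z) := by
    rw [key hx hz]; exact sut_E _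
  rw [key hxy hz, key hyx hz, key hx hyz, key hy hxz, key hy hz, key hx hz, D_E hB, D_E hC,
    key hx hy, key hy hx, ← map_sub, ← map_sub]
  apply congrArg
  rw [sub_eq_iff_eq_add.mp hPQ]
  noncomm_ring
end

section
/- Let ι be a linearly ordered set whose order is well-founded (every nonempty subset has a least element). For each i ∈ ι let Λ_i be a linearly ordered abelian group and H_i a group with an orientation-preserving affine action on Λ_i. Equip Λ = ∏_{i∈ι} Λ_i with the lexicographic order: x < y iff x_{i₀} < y_{i₀} where i₀ is the least index at which x and y differ. Then the componentwise action of H = ∏_{i∈ι} H_i on Λ is an orientation-preserving affine action; moreover this action is free if each of the given actions is free, every element of H acts rigidly if every element of each H_i acts rigidly, and the action of H is essentially free if each of the given actions is essentially free. -/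
namespace OPAffineAut

section Rigid

variable {Λ : Type*} [AddCommGroup Λ] [LinearOrder Λ] [IsOrderedAddMonoid Λ] {f : OPAffineAut Λ}

theorem apply_lt_apply {x y : Λ} : f x < f y ↔ x < y := f.strictMono'.lt_iff_lt

@[simp] theorem apply_inv_apply (x : Λ) : f (f⁻¹ x) = x := f.toEquiv.apply_symm_apply x

@[simp] theorem inv_apply_apply (x : Λ) : f⁻¹ (f x) = x := f.toEquiv.symm_apply_apply x

theorem lt_inv_apply_iff {x : Λ} : x < f⁻¹ x ↔ f x < x := by
  rw [← apply_lt_apply (f := f), apply_inv_apply]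

theorem rigid_iff :
    f.Rigid ↔ (∀ a, a < f a → ∀ b, b < f b) ∧ (∀ a, f a < a → ∀ b, f b < b) := by
  simp only [Rigid, forall_eq_or_imp, forall_eq, zpow_one, zpow_neg_one, lt_inv_apply_iff,
    forall_exists_index]

theorem Rigid.lt_apply (hf : f.Rigid) {a : Λ} (ha : a < f a) (b : Λ) : b < f b :=
  (rigid_iff.1 hf).1 a ha b

theorem Rigid.apply_lt (hf : f.Rigid) {a : Λ} (ha : f a < a) (b : Λ) : f b < b :=
  (rigid_iff.1 hf).2 a ha b

theorem Rigid.apply_eq_self (hf : f.Rigid) {a : Λ} (ha : f a = a) (b : Λ) : f b = b := by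
  rcases lt_trichotomy b (f b) with hb | hb | hb
  · exact absurd (hf.lt_apply hb a) ha.not_gt
  · exact hb.symm
  · exact absurd (hf.apply_lt hb a) ha.not_lt

theorem rigid_one : (1 : OPAffineAut Λ).Rigid :=
  rigid_iff.2 ⟨fun a ha => absurd ha (lt_irrefl a), fun a ha => absurd ha (lt_irrefl a)⟩

end Rigid

section PiLex

variable {ι : Type*} [LinearOrder ι] [WellFoundedLT ι]
  {Λ : ι → Type*} [∀ i, AddCommGroup (Λ i)] [∀ i, LinearOrder (Λ i)]
  [∀ i, IsOrderedAddMonoid (Λ i)]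

def piLexDilation (F : ∀ i, Λ i ≃+ Λ i) : Lex (∀ i, Λ i) ≃+ Lex (∀ i, Λ i) where
  toFun x := toLex fun i => F i (ofLex x i)
  invFun x := toLex fun i => (F i).symm (ofLex x i)
  left_inv x := congrArg toLex (funext fun i => (F i).symm_apply_apply (ofLex x i))
  right_inv x := congrArg toLex (funext fun i => (F i).apply_symm_apply (ofLex x i))
  map_add' a b := congrArg toLex (funext fun i => map_add (F i) (ofLex a i) (ofLex b i))

def piLex (F : ∀ i, OPAffineAut (Λ i)) : OPAffineAut (Lex (∀ i, Λ i)) where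
  toFun x := toLex fun i => F i (ofLex x i)
  invFun x := toLex fun i => (F i)⁻¹ (ofLex x i)
  left_inv x := congrArg toLex (funext fun i => inv_apply_apply (ofLex x i))
  right_inv x := congrArg toLex (funext fun i => apply_inv_apply (ofLex x i))
  strictMono' := by
    rintro x y ⟨i, hj, hi⟩
    exact ⟨i, fun j hji => congrArg (F j) (hj j hji), (F i).strictMono' hi⟩
  dilation := piLexDilation fun i => (F i).dilation
  dilation_strictMono := by
    rintro x y ⟨i, hj, hi⟩
    exact ⟨i, fun j hji => congrArg (F j).dilation (hj j hji), (F i).dilation_strictMono hi⟩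
  affine x y := congrArg toLex (funext fun i => (F i).affine (ofLex x i) (ofLex y i))

theorem piLex_apply (F : ∀ i, OPAffineAut (Λ i)) (x : Lex (∀ i, Λ i)) (i : ι) :
    ofLex (piLex F x) i = F i (ofLex x i) := rfl

def piLexHom : (∀ i, OPAffineAut (Λ i)) →* OPAffineAut (Lex (∀ i, Λ i)) where
  toFun := piLex
  map_one' := ext' fun _ => rfl
  map_mul' _ _ := ext' fun _ => rfl

theorem Hyperbolic.piLex {F : ∀ i, OPAffineAut (Λ i)} {i : ι} (hF : (F i).Hyperbolic) :
    (piLex F).Hyperbolic :=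
  fun x hx => hF (ofLex x i) (congrFun (congrArg ofLex hx) i)

/-- Below the first index where `x` moves, every factor has a fixed point, hence is the
identity by rigidity; so every `y` moves in the same direction at that same index. -/
theorem Rigid.piLex {F : ∀ i, OPAffineAut (Λ i)} (hF : ∀ i, (F i).Rigid) :
    (piLex F).Rigid := by
  refine rigid_iff.2 ⟨?_, ?_⟩
  · rintro x ⟨i, hfix, hi⟩ y
    exact ⟨i, fun j hj => ((hF j).apply_eq_self (hfix j hj).symm _).symm, (hF i).lt_apply hi _⟩
  · rintro x ⟨i, hfix, hi⟩ y
    exact ⟨i, fun j hj => (hF j).apply_eq_self (hfix j hj) _, (hF i).apply_lt hi _⟩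

end PiLex

end OPAffineAut

open OPAffineAut in
/-- Let `ι` be a linearly ordered set whose order is well-founded, and for
each `i` let `H i` act on `Λ i` by an orientation-preserving affine action. Then the
componentwise action of `∀ i, H i` on the lexicographically ordered product `Lex (∀ i, Λ i)`
is an orientation-preserving affine action, which is free (resp. everywhere rigid,
essentially free) whenever all the given actions are. -/
theorem product_affineAction (ι : Type*) [LinearOrder ι] [WellFoundedLT ι]
    (Λ : ι → Type*) [∀ i, AddCommGroup (Λ i)] [∀ i, LinearOrder (Λ i)]
    [∀ i, IsOrderedAddMonoid (Λ i)]
    (H : ι → Type*) [∀ i, Group (H i)]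
    (ρ : ∀ i, H i →* OPAffineAut (Λ i)) :
    ∃ ρbar : (∀ i, H i) →* OPAffineAut (Lex (∀ i, Λ i)),
      (∀ (h : ∀ i, H i) (x : ∀ i, Λ i) (i : ι),
        ofLex (ρbar h (toLex x)) i = (ρ i) (h i) (x i)) ∧
      ((∀ i, AffineActionFree (ρ i)) → AffineActionFree ρbar) ∧
      ((∀ i, ∀ g : H i, ((ρ i) g).Rigid) → ∀ h : ∀ i, H i, (ρbar h).Rigid) ∧
      ((∀ i, AffineActionEssentiallyFree (ρ i)) → AffineActionEssentiallyFree ρbar) := by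
  refine ⟨piLexHom.comp (MonoidHom.piMap ρ), fun _ _ _ => rfl, ?_, ?_, ?_⟩
  · intro hfree h hh
    obtain ⟨i, hi⟩ := Function.ne_iff.1 hh
    exact Hyperbolic.piLex (hfree i (h i) hi)
  · exact fun hrigid h => Rigid.piLex fun i => hrigid i (h i)
  · intro hess h hh
    obtain ⟨i, hi⟩ := Function.ne_iff.1 hh
    have hrigid (j : ι) : (ρ j (h j)).Rigid := by
      by_cases hj : h j = 1
      · rw [hj, map_one]; exact rigid_one
      · exact (hess j (h j) hj).1
    exact ⟨Rigid.piLex hrigid, Hyperbolic.piLex (hess i (h i) hi).2⟩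
end
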